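/- arXiv:2212.09715 — 5 statements merged into one kernel-verified Lean document; each statement's English description precedes it below -/
import Mathlib

section
/- Let P(n, q) be the probability that at least n+1 of 2n+1 independent Bernoulli(q) trials succeed. If q ∈ (1/2, 1), then P(n, q) is strictly increasing in n and tends to 1 as n → ∞; if q ∈ (0, 1/2), then P(n, q) is strictly decreasing in n and tends to 0 as n → ∞. -/
open Finset Filter

noncomputable def Tq (q : ℝ) (N a : ℕ) : ℝ :=
  ∑ k ∈ Finset.Icc a N, (N.choose k : ℝ) * q ^ k * (1 - q) ^ (N - k)

lemma sum_Icc_shift (f : ℕ → ℝ) (a N : ℕ) :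
    ∑ k ∈ Finset.Icc (a+1) (N+1), f k = ∑ j ∈ Finset.Icc a N, f (j+1) := by
  rw [← Finset.map_add_right_Icc a N 1, Finset.sum_map]
  rfl

lemma Tq_rec (q : ℝ) (N a : ℕ) (ha : a ≤ N) :
    Tq q (N+1) (a+1) = q * Tq q N a + (1-q) * Tq q N (a+1) := by
  unfold Tq
  rw [sum_Icc_shift (fun k => ((N+1).choose k : ℝ) * q ^ k * (1 - q) ^ (N + 1 - k)) a N]
  have key : ∀ j ∈ Finset.Icc a N,
      ((N+1).choose (j+1) : ℝ) * q ^ (j+1) * (1-q) ^ (N+1-(j+1))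
        = q * ((N.choose j : ℝ) * q^j * (1-q)^(N-j))
          + ((N.choose (j+1) : ℝ) * q^(j+1) * (1-q)^(N+1-(j+1))) := by
    intro j hj
    rw [Nat.choose_succ_succ, Nat.succ_sub_succ]
    push_cast [Nat.succ_eq_add_one]
    ring
  rw [Finset.sum_congr rfl key, Finset.sum_add_distrib, ← Finset.mul_sum]
  congr 1
  -- second sum equals (1-q) * Tq q N (a+1)
  have h2 : ∑ j ∈ Finset.Icc a N, ((N.choose (j+1) : ℝ) * q^(j+1) * (1-q)^(N+1-(j+1)))
      = ∑ k ∈ Finset.Icc (a+1) (N+1), ((N.choose k : ℝ) * q^k * (1-q)^(N+1-k)) := by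
    rw [sum_Icc_shift (fun k => ((N.choose k : ℝ) * q^k * (1-q)^(N+1-k))) a N]
  rw [h2, Finset.sum_Icc_succ_top (by omega : a+1 ≤ N+1)]
  rw [Nat.choose_succ_self]
  push_cast
  rw [Finset.mul_sum]
  simp only [zero_mul, add_zero]
  apply Finset.sum_congr rfl
  intro k hk
  simp only [Finset.mem_Icc] at hk
  rw [show N+1-k = (N-k)+1 from by omega, pow_succ]
  ring

lemma Tq_bot (q : ℝ) (N a : ℕ) (ha : a ≤ N) :
    Tq q N a = (N.choose a : ℝ) * q^a * (1-q)^(N-a) + Tq q N (a+1) := by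
  unfold Tq
  rw [← Finset.Ioc_insert_left ha, Finset.sum_insert (by simp), Finset.Icc_add_one_left_eq_Ioc]

lemma Pdiff (q : ℝ) (n : ℕ) :
    Tq q (2*n+3) (n+2) = Tq q (2*n+1) (n+1)
      + (2*q-1) * ((2*n+1).choose n : ℝ) * (q*(1-q))^(n+1) := by
  have h1 := Tq_rec q (2*n+2) (n+1) (by omega)
  have h2 := Tq_rec q (2*n+1) n (by omega)
  have h3 := Tq_rec q (2*n+1) (n+1) (by omega)
  have h4 := Tq_bot q (2*n+1) n (by omega)
  have h5 := Tq_bot q (2*n+1) (n+1) (by omega)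
  have hsymN : (2*n+1).choose (n+1) = (2*n+1).choose n :=
    ((Nat.choose_symm (by omega : n+1 ≤ 2*n+1)).symm).trans
      (by rw [show (2*n+1)-(n+1) = n from by omega])
  have hsym : ((2*n+1).choose (n+1) : ℝ) = ((2*n+1).choose n : ℝ) := by rw [hsymN]
  simp only [show 2*n+2+1 = 2*n+3 from by omega, show n+1+1 = n+2 from by omega,
    show 2*n+1+1 = 2*n+2 from by omega, show 2*n+1-n = n+1 from by omega,
    show 2*n+1-(n+1) = n from by omega] at h1 h2 h3 h4 h5
  rw [h1, h2, h3, h4, h5, hsym, mul_pow]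
  ring

lemma full_sum (q : ℝ) (n : ℕ) :
    (∑ k ∈ Finset.range (n+1), ((2*n+1).choose k : ℝ) * q^k * (1-q)^(2*n+1-k))
      + Tq q (2*n+1) (n+1) = 1 := by
  have h : (∑ k ∈ Finset.range (2*n+2), ((2*n+1).choose k : ℝ) * q^k * (1-q)^(2*n+1-k)) = 1 := by
    have h0 := add_pow q (1-q) (2*n+1)
    rw [show q + (1-q) = 1 from by ring, one_pow] at h0
    calc ∑ k ∈ Finset.range (2*n+2), ((2*n+1).choose k : ℝ) * q^k * (1-q)^(2*n+1-k)
        = ∑ k ∈ Finset.range (2*n+1+1), q^k * (1-q)^(2*n+1-k) * ((2*n+1).choose k : ℝ) := by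
          apply Finset.sum_congr rfl; intro k _; ring
      _ = 1 := h0.symm
  have e1 : Finset.Icc (n+1) (2*n+1) = Finset.Ico (n+1) (2*n+2) := by
    rw [show 2*n+2 = (2*n+1)+1 from rfl, Finset.Ico_add_one_right_eq_Icc]
  unfold Tq
  rw [e1, Finset.range_eq_Ico,
    Finset.sum_Ico_consecutive _ (by omega : 0 ≤ n+1) (by omega : n+1 ≤ 2*n+2),
    ← Finset.range_eq_Ico]
  exact h

lemma choose_sum_le (n : ℕ) (s : Finset ℕ) (hs : s ⊆ Finset.range (2*n+2)) :
    (∑ k ∈ s, ((2*n+1).choose k : ℝ)) ≤ 2^(2*n+1) := by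
  have h : (∑ k ∈ s, (2*n+1).choose k) ≤ ∑ k ∈ Finset.range (2*n+2), (2*n+1).choose k :=
    Finset.sum_le_sum_of_subset hs
  rw [show 2*n+2 = 2*n+1+1 from rfl, Nat.sum_range_choose] at h
  exact_mod_cast h

lemma bound_hi (q : ℝ) (hq : 1/2 ≤ q) (hq1 : q ≤ 1) (n : ℕ) :
    1 - 2*(1-q)*(4*q*(1-q))^n ≤ Tq q (2*n+1) (n+1) := by
  have hfs := full_sum q n
  have hq0 : (0:ℝ) ≤ q := by linarith
  have h1q : (0:ℝ) ≤ 1 - q := by linarith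
  have hle : 1 - q ≤ q := by linarith
  have hL : (∑ k ∈ Finset.range (n+1), ((2*n+1).choose k : ℝ) * q^k * (1-q)^(2*n+1-k))
      ≤ 2*(1-q)*(4*q*(1-q))^n := by
    calc ∑ k ∈ Finset.range (n+1), ((2*n+1).choose k : ℝ) * q^k * (1-q)^(2*n+1-k)
        ≤ ∑ k ∈ Finset.range (n+1), ((2*n+1).choose k : ℝ) * (q^n*(1-q)^(n+1)) := by
          apply Finset.sum_le_sum
          intro k hk
          simp only [Finset.mem_range] at hk
          have hkn : k ≤ n := by omega
          have hterm : q^k*(1-q)^(2*n+1-k) ≤ q^n*(1-q)^(n+1) := by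
            calc q^k*(1-q)^(2*n+1-k) = (q^k*(1-q)^(n-k)) * (1-q)^(n+1) := by
                  rw [show 2*n+1-k = (n-k)+(n+1) from by omega, pow_add]; ring
              _ ≤ (q^k*q^(n-k)) * (1-q)^(n+1) := by
                  apply mul_le_mul_of_nonneg_right _ (pow_nonneg h1q _)
                  exact mul_le_mul_of_nonneg_left (pow_le_pow_left₀ h1q hle _) (pow_nonneg hq0 _)
              _ = q^n*(1-q)^(n+1) := by rw [← pow_add, show k+(n-k) = n from by omega]
          calc ((2*n+1).choose k : ℝ) * q^k * (1-q)^(2*n+1-k)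
              = ((2*n+1).choose k : ℝ) * (q^k*(1-q)^(2*n+1-k)) := by ring
            _ ≤ ((2*n+1).choose k : ℝ) * (q^n*(1-q)^(n+1)) :=
                mul_le_mul_of_nonneg_left hterm (Nat.cast_nonneg _)
      _ = (∑ k ∈ Finset.range (n+1), ((2*n+1).choose k:ℝ)) * (q^n*(1-q)^(n+1)) := by
          rw [← Finset.sum_mul]
      _ ≤ 2^(2*n+1) * (q^n*(1-q)^(n+1)) := by
          apply mul_le_mul_of_nonneg_right
            (choose_sum_le n _ (Finset.range_subset_range.mpr (by omega)))
          exact mul_nonneg (pow_nonneg hq0 _) (pow_nonneg h1q _)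
      _ = 2*(1-q)*(4*q*(1-q))^n := by
          rw [mul_pow, mul_pow, show (4:ℝ) = 2^2 from by norm_num, ← pow_mul]; ring
  linarith

lemma bound_lo (q : ℝ) (hq0 : 0 ≤ q) (hq : q ≤ 1/2) (n : ℕ) :
    Tq q (2*n+1) (n+1) ≤ 2*q*(4*q*(1-q))^n := by
  have h1q : (0:ℝ) ≤ 1 - q := by linarith
  have hle : q ≤ 1 - q := by linarith
  calc Tq q (2*n+1) (n+1)
      ≤ ∑ k ∈ Finset.Icc (n+1) (2*n+1), ((2*n+1).choose k : ℝ) * (q^(n+1)*(1-q)^n) := by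
        apply Finset.sum_le_sum
        intro k hk
        simp only [Finset.mem_Icc] at hk
        have hterm : q^k*(1-q)^(2*n+1-k) ≤ q^(n+1)*(1-q)^n := by
          have e : q^k = q^(n+1)*q^(k-(n+1)) := by
            rw [← pow_add, show (n+1)+(k-(n+1)) = k from by omega]
          calc q^k*(1-q)^(2*n+1-k) = q^(n+1)*q^(k-(n+1))*(1-q)^(2*n+1-k) := by rw [e]
            _ ≤ q^(n+1)*(1-q)^(k-(n+1))*(1-q)^(2*n+1-k) := by
                apply mul_le_mul_of_nonneg_right _ (pow_nonneg h1q _)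
                exact mul_le_mul_of_nonneg_left (pow_le_pow_left₀ hq0 hle _) (pow_nonneg hq0 _)
            _ = q^(n+1)*(1-q)^n := by
                rw [mul_assoc, ← pow_add, show (k-(n+1))+(2*n+1-k) = n from by omega]
        calc ((2*n+1).choose k : ℝ) * q^k * (1-q)^(2*n+1-k)
            = ((2*n+1).choose k : ℝ) * (q^k*(1-q)^(2*n+1-k)) := by ring
          _ ≤ ((2*n+1).choose k : ℝ) * (q^(n+1)*(1-q)^n) :=
              mul_le_mul_of_nonneg_left hterm (Nat.cast_nonneg _)
    _ = (∑ k ∈ Finset.Icc (n+1) (2*n+1), ((2*n+1).choose k:ℝ)) * (q^(n+1)*(1-q)^n) := by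
        rw [← Finset.sum_mul]
    _ ≤ 2^(2*n+1) * (q^(n+1)*(1-q)^n) := by
        apply mul_le_mul_of_nonneg_right
        · apply choose_sum_le n
          intro k hk
          simp only [Finset.mem_Icc] at hk
          simp only [Finset.mem_range]
          omega
        · exact mul_nonneg (pow_nonneg hq0 _) (pow_nonneg h1q _)
    _ = 2*q*(4*q*(1-q))^n := by
        rw [mul_pow, mul_pow, show (4:ℝ) = 2^2 from by norm_num, ← pow_mul]; ring

lemma Tq_nonneg (q : ℝ) (hq0 : 0 ≤ q) (hq1 : q ≤ 1) (N a : ℕ) : 0 ≤ Tq q N a := by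
  apply Finset.sum_nonneg
  intro k _
  exact mul_nonneg (mul_nonneg (Nat.cast_nonneg _) (pow_nonneg hq0 _))
    (pow_nonneg (by linarith) _)

lemma Tq_le_one (q : ℝ) (hq0 : 0 ≤ q) (hq1 : q ≤ 1) (n : ℕ) : Tq q (2*n+1) (n+1) ≤ 1 := by
  have hfs := full_sum q n
  have hL : 0 ≤ ∑ k ∈ Finset.range (n+1), ((2*n+1).choose k : ℝ) * q^k * (1-q)^(2*n+1-k) := by
    apply Finset.sum_nonneg
    intro k _
    exact mul_nonneg (mul_nonneg (Nat.cast_nonneg _) (pow_nonneg hq0 _))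
      (pow_nonneg (by linarith) _)
  linarith

theorem stmt_7 (q : ℝ)
    (P : ℕ → ℝ)
    (hP : ∀ n, P n = ∑ k ∈ Finset.Icc (n + 1) (2 * n + 1),
      (Nat.choose (2 * n + 1) k : ℝ) * q ^ k * (1 - q) ^ (2 * n + 1 - k)) :
    (q ∈ Set.Ioo (1/2 : ℝ) 1 →
      StrictMono P ∧ Filter.Tendsto P Filter.atTop (nhds 1)) ∧
    (q ∈ Set.Ioo (0 : ℝ) (1/2) →
      StrictAnti P ∧ Filter.Tendsto P Filter.atTop (nhds 0)) := by
  have hPT : ∀ n, P n = Tq q (2*n+1) (n+1) := fun n => (hP n).trans rfl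
  have hsucc : ∀ n, P (n+1) = P n
      + (2*q-1) * ((2*n+1).choose n : ℝ) * (q*(1-q))^(n+1) := by
    intro n
    rw [hPT (n+1), hPT n, show 2*(n+1)+1 = 2*n+3 from by ring]
    exact Pdiff q n
  constructor
  · rintro ⟨hq, hq1⟩
    have hq0 : (0:ℝ) < q := by linarith
    have h1q : (0:ℝ) < 1 - q := by linarith
    constructor
    · apply strictMono_nat_of_lt_succ
      intro n
      rw [hsucc n]
      have hc : (0:ℝ) < ((2*n+1).choose n : ℝ) := by
        exact_mod_cast Nat.choose_pos (by omega : n ≤ 2*n+1)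
      have hpow : (0:ℝ) < (q*(1-q))^(n+1) := pow_pos (by nlinarith) _
      have hpos : 0 < (2*q-1) * ((2*n+1).choose n : ℝ) * (q*(1-q))^(n+1) :=
        mul_pos (mul_pos (by linarith) hc) hpow
      linarith
    · have hr0 : (0:ℝ) ≤ 4*q*(1-q) := by nlinarith
      have hr1 : 4*q*(1-q) < 1 := by nlinarith [sq_nonneg (2*q-1)]
      have ht : Filter.Tendsto (fun n : ℕ => (4*q*(1-q))^n) Filter.atTop (nhds 0) :=
        tendsto_pow_atTop_nhds_zero_of_lt_one hr0 hr1
      have hlowT : Filter.Tendsto (fun n : ℕ => 1 - 2*(1-q)*(4*q*(1-q))^n)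
          Filter.atTop (nhds 1) := by
        have := (ht.const_mul (2*(1-q))).const_sub 1
        simpa using this
      apply tendsto_of_tendsto_of_tendsto_of_le_of_le hlowT tendsto_const_nhds
      · intro n
        rw [hPT n]
        exact bound_hi q (le_of_lt hq) (le_of_lt hq1) n
      · intro n
        rw [hPT n]
        exact Tq_le_one q (le_of_lt hq0) (le_of_lt hq1) n
  · rintro ⟨hq0, hq⟩
    have hq1 : q < 1 := by linarith
    have h1q : (0:ℝ) < 1 - q := by linarith
    constructor
    · apply strictAnti_nat_of_succ_lt
      intro n
      rw [hsucc n]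
      have hc : (0:ℝ) < ((2*n+1).choose n : ℝ) := by
        exact_mod_cast Nat.choose_pos (by omega : n ≤ 2*n+1)
      have hpow : (0:ℝ) < (q*(1-q))^(n+1) := pow_pos (by nlinarith) _
      have hpos : 0 < (1-2*q) * ((2*n+1).choose n : ℝ) * (q*(1-q))^(n+1) :=
        mul_pos (mul_pos (by linarith) hc) hpow
      nlinarith
    · have hr0 : (0:ℝ) ≤ 4*q*(1-q) := by nlinarith
      have hr1 : 4*q*(1-q) < 1 := by nlinarith [sq_nonneg (2*q-1)]
      have ht : Filter.Tendsto (fun n : ℕ => (4*q*(1-q))^n) Filter.atTop (nhds 0) :=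
        tendsto_pow_atTop_nhds_zero_of_lt_one hr0 hr1
      have hupT : Filter.Tendsto (fun n : ℕ => 2*q*(4*q*(1-q))^n) Filter.atTop (nhds 0) := by
        have := ht.const_mul (2*q)
        simpa using this
      apply tendsto_of_tendsto_of_tendsto_of_le_of_le tendsto_const_nhds hupT
      · intro n
        rw [hPT n]
        exact Tq_nonneg q (le_of_lt hq0) (le_of_lt hq1) _ _
      · intro n
        rw [hPT n]
        exact bound_lo q (le_of_lt hq0) (le_of_lt hq) n
end

section
/- For an odd number 2n+1 of independent Bernoulli(q) trials, the probability P(q) that at least n+1 trials succeed is strictly increasing in q on (0,1), and satisfies P(1/2) = 1/2 and P(q) > q for all q ∈ (1/2, 1) when n ≥ 1. -/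
open Finset

lemma term_hasDerivAt (c : ℝ) (k m : ℕ) (q : ℝ) :
    HasDerivAt (fun q : ℝ => c * q ^ k * (1 - q) ^ m)
      (c * (k * q ^ (k - 1)) * (1 - q) ^ m - c * q ^ k * (m * (1 - q) ^ (m - 1))) q := by
  have h1 : HasDerivAt (fun q : ℝ => q ^ k) (k * q ^ (k - 1)) q := hasDerivAt_pow k q
  have h2 : HasDerivAt (fun q : ℝ => (1 - q) ^ m) (-(m * (1 - q) ^ (m - 1))) q := by
    have := (hasDerivAt_pow m (1 - q)).comp q
      (((hasDerivAt_id q).const_sub 1) : HasDerivAt (fun q : ℝ => 1 - q) (-1) q)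
    simpa [Function.comp_def] using this
  have := (h1.const_mul c).mul h2
  exact this.congr_deriv (by ring)

lemma cast_id1 (n k : ℕ) (hk : n + 1 ≤ k) :
    ((2 * n + 1).choose k : ℝ) * k = (2 * n + 1) * ((2 * n).choose (k - 1)) := by
  have hnat : (2 * n + 1).choose k * k = (2 * n + 1) * (2 * n).choose (k - 1) := by
    have h1 : k - 1 + 1 = k := by omega
    have h := Nat.add_one_mul_choose_eq (2 * n) (k - 1)
    rw [h1] at h
    exact h.symm
  exact_mod_cast hnat

lemma cast_id2 (n k : ℕ) :
    ((2 * n + 1).choose k : ℝ) * ((2 * n + 1 - k : ℕ) : ℝ) = (2 * n + 1) * ((2 * n).choose k) := by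
  have hnat : (2 * n + 1).choose k * (2 * n + 1 - k) = (2 * n + 1) * (2 * n).choose k := by
    have h := Nat.choose_mul_succ_eq (2 * n) k
    rw [← h]; ring
  exact_mod_cast hnat

lemma P_hasDerivAt (n : ℕ) (q : ℝ) :
    HasDerivAt (fun q : ℝ => ∑ k ∈ Finset.Icc (n + 1) (2 * n + 1),
        (Nat.choose (2 * n + 1) k : ℝ) * q ^ k * (1 - q) ^ (2 * n + 1 - k))
      ((2 * n + 1) * ((2 * n).choose n) * (q ^ n * (1 - q) ^ n)) q := by
  set g : ℕ → ℝ := fun j => ((2 * n).choose j : ℝ) * q ^ j * (1 - q) ^ (2 * n - j) with hg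
  have key : ∀ k ∈ Finset.Icc (n + 1) (2 * n + 1),
      HasDerivAt (fun q : ℝ => (Nat.choose (2 * n + 1) k : ℝ) * q ^ k * (1 - q) ^ (2 * n + 1 - k))
        ((2 * n + 1) * (g (k - 1) - g k)) q := by
    intro k hk
    simp only [Finset.mem_Icc] at hk
    have := term_hasDerivAt ((Nat.choose (2 * n + 1) k : ℝ)) k (2 * n + 1 - k) q
    convert this using 1
    have e1 : 2 * n + 1 - k = 2 * n - (k - 1) := by omega
    have e3 : 2 * n - (k - 1) - 1 = 2 * n - k := by omega
    rw [hg]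
    simp only [e1, e3]
    have c1 := cast_id1 n k hk.1
    have c2 := cast_id2 n k
    rw [e1] at c2
    linear_combination (-(q ^ (k - 1) * (1 - q) ^ (2 * n - (k - 1)))) * c1 +
      (q ^ k * (1 - q) ^ (2 * n - k)) * c2
  have hsum : ∑ k ∈ Finset.Icc (n + 1) (2 * n + 1), ((2 * n + 1 : ℝ)) * (g (k - 1) - g k)
      = (2 * n + 1) * ((2 * n).choose n) * (q ^ n * (1 - q) ^ n) := by
    rw [← Finset.Ico_add_one_right_eq_Icc, Finset.sum_Ico_eq_sum_range]
    have hlen : 2 * n + 1 + 1 - (n + 1) = n + 1 := by omega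
    rw [hlen, ← Finset.mul_sum]
    have hcongr : ∀ i ∈ Finset.range (n + 1),
        g (n + 1 + i - 1) - g (n + 1 + i) = (fun j => g (n + j)) i - (fun j => g (n + j)) (i + 1) := by
      intro i _
      have : n + 1 + i - 1 = n + i := by omega
      have h2 : n + 1 + i = n + (i + 1) := by omega
      rw [this, h2]
    rw [Finset.sum_congr rfl hcongr, Finset.sum_range_sub' (fun j => g (n + j)) (n + 1)]
    have hzero : g (n + (n + 1)) = 0 := by
      have : (2 * n).choose (n + (n + 1)) = 0 := Nat.choose_eq_zero_of_lt (by omega)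
      simp [hg, this]
    rw [hzero, hg]
    simp only [Nat.add_zero, sub_zero]
    have : 2 * n - n = n := by omega
    rw [this]
    ring
  have := HasDerivAt.fun_sum key
  rw [hsum] at this
  exact this

lemma choose_sum_upper (n : ℕ) :
    ∑ k ∈ Finset.Icc (n + 1) (2 * n + 1), (2 * n + 1).choose k = 4 ^ n := by
  have h1 : ∑ k ∈ Finset.range (n + 1), (2 * n + 1).choose k = 4 ^ n :=
    Nat.sum_range_choose_halfway n
  have h2 : ∑ k ∈ Finset.range (2 * n + 2), (2 * n + 1).choose k = 2 ^ (2 * n + 1) :=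
    Nat.sum_range_choose (2 * n + 1)
  have h3 : ∑ k ∈ Finset.range (n + 1), (2 * n + 1).choose k
      + ∑ k ∈ Finset.Ico (n + 1) (2 * n + 2), (2 * n + 1).choose k
      = ∑ k ∈ Finset.range (2 * n + 2), (2 * n + 1).choose k := by
    rw [Finset.range_eq_Ico, Finset.range_eq_Ico]
    exact Finset.sum_Ico_consecutive (fun k => (2 * n + 1).choose k) (by omega : 0 ≤ n + 1) (by omega : n + 1 ≤ 2 * n + 2)
  have h4 : 2 ^ (2 * n + 1) = 2 * 4 ^ n := by
    rw [pow_succ, pow_mul]; norm_num; ring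
  have h5 : Finset.Icc (n + 1) (2 * n + 1) = Finset.Ico (n + 1) (2 * n + 2) := by
    rw [← Finset.Ico_add_one_right_eq_Icc]; rfl
  rw [h5]
  omega

lemma P_at_one (n : ℕ) :
    ∑ k ∈ Finset.Icc (n + 1) (2 * n + 1),
      (Nat.choose (2 * n + 1) k : ℝ) * (1:ℝ) ^ k * (1 - 1) ^ (2 * n + 1 - k) = 1 := by
  rw [Finset.sum_eq_single (2 * n + 1)]
  · simp
  · intro k hk hne
    simp only [Finset.mem_Icc] at hk
    have : 2 * n + 1 - k ≠ 0 := by omega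
    simp [zero_pow this]
  · intro h
    exact absurd (Finset.mem_Icc.mpr ⟨by omega, le_refl _⟩) h

lemma P_at_half (n : ℕ) :
    ∑ k ∈ Finset.Icc (n + 1) (2 * n + 1),
      (Nat.choose (2 * n + 1) k : ℝ) * (1/2 : ℝ) ^ k * (1 - 1/2) ^ (2 * n + 1 - k) = 1/2 := by
  have step : ∀ k ∈ Finset.Icc (n + 1) (2 * n + 1),
      (Nat.choose (2 * n + 1) k : ℝ) * (1/2 : ℝ) ^ k * (1 - 1/2) ^ (2 * n + 1 - k)
        = (Nat.choose (2 * n + 1) k : ℝ) * (1/2 : ℝ) ^ (2 * n + 1) := by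
    intro k hk
    simp only [Finset.mem_Icc] at hk
    have h12 : (1 : ℝ) - 1/2 = 1/2 := by norm_num
    rw [h12, mul_assoc, ← pow_add]
    congr 2
    omega
  rw [Finset.sum_congr rfl step, ← Finset.sum_mul]
  have : ∑ k ∈ Finset.Icc (n + 1) (2 * n + 1), (Nat.choose (2 * n + 1) k : ℝ) = 4 ^ n := by
    rw [← Nat.cast_sum, choose_sum_upper]
    push_cast; ring
  rw [this, show ((1:ℝ)/2) ^ (2 * n + 1) = (1/(4:ℝ)) ^ n * (1/2) by
    rw [pow_succ, pow_mul]; norm_num]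
  rw [← mul_assoc, ← mul_pow]
  norm_num

theorem stmt_8 (n : ℕ)
    (P : ℝ → ℝ)
    (hP : ∀ q, P q = ∑ k ∈ Finset.Icc (n + 1) (2 * n + 1),
      (Nat.choose (2 * n + 1) k : ℝ) * q ^ k * (1 - q) ^ (2 * n + 1 - k)) :
    StrictMonoOn P (Set.Ioo (0 : ℝ) 1) ∧
    P (1/2) = 1/2 ∧
    (1 ≤ n → ∀ q ∈ Set.Ioo (1/2 : ℝ) 1, P q > q) := by
  have hPeq : P = fun q => ∑ k ∈ Finset.Icc (n + 1) (2 * n + 1),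
      (Nat.choose (2 * n + 1) k : ℝ) * q ^ k * (1 - q) ^ (2 * n + 1 - k) := funext hP
  subst hPeq
  set c : ℝ := (2 * n + 1) * ((2 * n).choose n) with hc
  have hcpos : 0 < c := by
    apply mul_pos
    · positivity
    · exact_mod_cast Nat.choose_pos (by omega : n ≤ 2 * n)
  have hD : ∀ q : ℝ, HasDerivAt (fun q : ℝ => ∑ k ∈ Finset.Icc (n + 1) (2 * n + 1),
      (Nat.choose (2 * n + 1) k : ℝ) * q ^ k * (1 - q) ^ (2 * n + 1 - k))
      (c * (q ^ n * (1 - q) ^ n)) q := by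
    intro q
    rw [hc]
    exact P_hasDerivAt n q
  refine ⟨?_, ?_, ?_⟩
  · apply strictMonoOn_of_deriv_pos (convex_Ioo 0 1)
    · exact fun x _ => (hD x).continuousAt.continuousWithinAt
    · intro x hx
      rw [interior_Ioo] at hx
      rw [(hD x).deriv]
      have h1 : 0 < x := hx.1
      have h2 : x < 1 := hx.2
      have : 0 < 1 - x := by linarith
      positivity
  · exact P_at_half n
  · intro hn q hq
    set f : ℝ → ℝ := fun q => (∑ k ∈ Finset.Icc (n + 1) (2 * n + 1),
      (Nat.choose (2 * n + 1) k : ℝ) * q ^ k * (1 - q) ^ (2 * n + 1 - k)) - q with hf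
    have hfD : ∀ x : ℝ, HasDerivAt f (c * (x ^ n * (1 - x) ^ n) - 1) x :=
      fun x => (hD x).sub (hasDerivAt_id x)
    have hderiv1 : deriv f = fun x => c * (x ^ n * (1 - x) ^ n) - 1 :=
      funext fun x => (hfD x).deriv
    have hconc : StrictConcaveOn ℝ (Set.Icc (1/2 : ℝ) 1) f := by
      apply strictConcaveOn_of_deriv2_neg (convex_Icc _ _)
      · exact fun x _ => ((hfD x).continuousAt.continuousWithinAt)
      · intro x hx
        rw [interior_Icc] at hx
        have hx1 : 1/2 < x := hx.1
        have hx2 : x < 1 := hx.2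
        have hd2 : HasDerivAt (fun x : ℝ => c * (x ^ n * (1 - x) ^ n) - 1)
            (c * ((n : ℝ) * x ^ (n - 1)) * (1 - x) ^ n - c * x ^ n * ((n : ℝ) * (1 - x) ^ (n - 1))) x := by
          have := (term_hasDerivAt c n n x).sub_const 1
          rw [show (fun x : ℝ => c * (x ^ n * (1 - x) ^ n) - 1) = fun x => c * x ^ n * (1 - x) ^ n - 1 from
            funext fun x => by ring]
          exact this
        simp only [Function.iterate_succ, Function.iterate_zero, Function.comp_apply, id_eq]
        rw [hderiv1, hd2.deriv]
        have hn1 : n = (n - 1) + 1 := by omega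
        have e1 : x ^ n = x ^ (n - 1) * x := by conv_lhs => rw [hn1, pow_succ]
        have e2 : (1 - x) ^ n = (1 - x) ^ (n - 1) * (1 - x) := by conv_lhs => rw [hn1, pow_succ]
        rw [e1, e2]
        have hpos : 0 < c * (n : ℝ) * x ^ (n - 1) * (1 - x) ^ (n - 1) := by
          have h1 : 0 < x := by linarith
          have h2 : (0:ℝ) < 1 - x := by linarith
          have h3 : (0:ℝ) < (n:ℝ) := by exact_mod_cast hn
          positivity
        nlinarith [hpos, hx1, hx2]
    have hf_half : f (1/2) = 0 := by
      rw [hf]; simp only; rw [P_at_half n]; norm_num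
    have hf_one : f 1 = 0 := by
      rw [hf]; simp only; rw [P_at_one n]; norm_num
    obtain ⟨hq1, hq2⟩ := hq
    have ha : (0:ℝ) < 2 * (1 - q) := by linarith
    have hb : (0:ℝ) < 2 * q - 1 := by linarith
    have hab : 2 * (1 - q) + (2 * q - 1) = 1 := by ring
    have hmem1 : (1/2 : ℝ) ∈ Set.Icc (1/2 : ℝ) 1 := by constructor <;> norm_num
    have hmem2 : (1 : ℝ) ∈ Set.Icc (1/2 : ℝ) 1 := by constructor <;> norm_num
    have hne : (1/2 : ℝ) ≠ 1 := by norm_num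
    have := hconc.2 hmem1 hmem2 hne ha hb hab
    have hcomb : (2 * (1 - q)) • (1/2 : ℝ) + (2 * q - 1) • (1 : ℝ) = q := by
      simp only [smul_eq_mul]; ring
    rw [hcomb, hf_half, hf_one] at this
    simp only [smul_eq_mul, mul_zero, add_zero] at this
    have : f q > 0 := this
    rw [hf] at this
    simpa using this
end

section
/- Let p = 7/10 and for t ∈ [1/2, 7/10) define μ(t) = (t + 7/10)/2. Then the equation p·(1-t)·(1-μ(t)) = (1-p)·t·μ(t) has a unique solution t* in the open interval (1/2, 7/10), and this solution satisfies 0.57 < t* < 0.58. -/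
/-!
Clearing denominators, the indifference condition with `p = 7/10` and `μ(t) = (t + 7/10)/2` is the
quadratic `40 t² - 182 t + 91 = 0`, whose roots are `(91 ± √4641)/40`. The larger root exceeds
`91/40 > 7/10`, so the smaller one is the only solution in `(1/2, 7/10)`, and
`67.8 < √4641 < 68.2` places it in `(0.57, 0.58)`.
-/

lemma indifference_iff_quadratic (t : ℝ) :
    7/10 * (1 - t) * (1 - (t + 7/10) / 2) = (1 - 7/10) * t * ((t + 7/10) / 2) ↔
      40 * (t * t) + (-182) * t + 91 = 0 := by
  have h : 7/10 * (1 - t) * (1 - (t + 7/10) / 2) - (1 - 7/10) * t * ((t + 7/10) / 2)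
      = (40 * (t * t) + (-182) * t + 91) / 200 := by ring
  constructor <;> intro _ <;> linarith

lemma threshold_quadratic_eq_zero_iff (t : ℝ) :
    40 * (t * t) + (-182) * t + 91 = 0 ↔
      t = (91 + √4641) / 40 ∨ t = (91 - √4641) / 40 := by
  have hdiscrim : discrim (40 : ℝ) (-182) 91 = (2 * √4641) * (2 * √4641) := by
    rw [discrim, mul_mul_mul_comm, Real.mul_self_sqrt (by norm_num)]
    norm_num
  rw [quadratic_eq_zero_iff (by norm_num) hdiscrim]
  congr! 2 <;> ring

lemma sqrt_4641_mem_Ioo : √4641 ∈ Set.Ioo (67.8 : ℝ) 68.2 :=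
  ⟨(Real.lt_sqrt (by norm_num)).2 (by norm_num), (Real.sqrt_lt' (by norm_num)).2 (by norm_num)⟩

theorem stmt_12 (p : ℝ) (hp : p = 7/10)
    (μ : ℝ → ℝ) (hμ : ∀ t, μ t = (t + 7/10) / 2) :
    ∃ t : ℝ, t ∈ Set.Ioo (1/2 : ℝ) (7/10) ∧
      p * (1 - t) * (1 - μ t) = (1 - p) * t * μ t ∧
      0.57 < t ∧ t < 0.58 ∧
      ∀ t' ∈ Set.Ioo (1/2 : ℝ) (7/10),
        p * (1 - t') * (1 - μ t') = (1 - p) * t' * μ t' → t' = t := by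
  subst hp
  simp only [hμ, indifference_iff_quadratic, threshold_quadratic_eq_zero_iff]
  obtain ⟨hlo, hhi⟩ := sqrt_4641_mem_Ioo
  refine ⟨(91 - √4641) / 40, ⟨by linarith, by linarith⟩, Or.inr rfl, by linarith, by linarith, ?_⟩
  rintro t' ⟨-, ht'⟩ (rfl | rfl)
  · linarith [Real.sqrt_nonneg 4641]
  · rfl
end

section
/- Let p ∈ (1/2, 1), let μ(t) = (t+p)/2 for t ∈ [1/2, p], and define h(t) = p·(1-t)·(1-μ(t)) - (1-p)·t·μ(t). Then h(1/2) > 0 and h(p) < 0, and h is strictly decreasing on [1/2, p]; hence the N=3 single-expert delegation equilibrium threshold exists, is unique, and lies strictly in (1/2, p). -/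
/-!
Substituting `μ t = (t + p) / 2` makes `h` the quadratic
`2 h(t) = (2p - 1) t² - 2p(2 - p) t + p(2 - p)`, so `h(1/2) = (2p - 1)/8` and
`h(p) = p (2p - 1)(p - 1)`. Its vertex `p(2 - p)/(2p - 1)` lies to the right of `p`, so `h` is
strictly decreasing on `[1/2, p]`, and the intermediate value theorem gives exactly one root.
-/

open Set

theorem StrictAntiOn.existsUnique_mem_Ioo_eq_zero {f : ℝ → ℝ} {a b : ℝ} (hab : a ≤ b)
    (hf : StrictAntiOn f (Icc a b)) (hcont : ContinuousOn f (Icc a b)) (ha : 0 < f a)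
    (hb : f b < 0) : ∃! t, t ∈ Ioo a b ∧ f t = 0 := by
  obtain ⟨t, ht, hft⟩ := intermediate_value_Ioo' hab hcont ⟨hb, ha⟩
  refine ⟨t, ⟨ht, hft⟩, fun s ⟨hs, hfs⟩ => ?_⟩
  exact hf.injOn (Ioo_subset_Icc_self hs) (Ioo_subset_Icc_self ht) (hfs.trans hft.symm)

namespace Delegation

/-- The paper's `h`, with `μ t = (t + p) / 2` substituted. -/
noncomputable def gap (p t : ℝ) : ℝ :=
  p * (1 - t) * (1 - (t + p) / 2) - (1 - p) * t * ((t + p) / 2)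

theorem gap_eq_quadratic (p t : ℝ) :
    gap p t = ((2 * p - 1) * t ^ 2 - 2 * p * (2 - p) * t + p * (2 - p)) / 2 := by
  unfold gap; ring

theorem gap_half (p : ℝ) : gap p (1 / 2) = (2 * p - 1) / 8 := by
  rw [gap_eq_quadratic]; ring

theorem gap_self (p : ℝ) : gap p p = p * (2 * p - 1) * (p - 1) := by
  rw [gap_eq_quadratic]; ring

theorem gap_half_pos {p : ℝ} (hp : 1 / 2 < p) : 0 < gap p (1 / 2) := by
  rw [gap_half]; linarith

theorem gap_self_neg {p : ℝ} (hp₀ : 1 / 2 < p) (hp₁ : p < 1) : gap p p < 0 := by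
  rw [gap_self]
  exact mul_neg_of_pos_of_neg (by nlinarith) (by linarith)

theorem gap_sub_gap (p x y : ℝ) :
    gap p x - gap p y = (x - y) * ((2 * p - 1) * (x + y) - 2 * p * (2 - p)) / 2 := by
  rw [gap_eq_quadratic, gap_eq_quadratic]; ring

theorem strictAntiOn_gap {p : ℝ} (hp₀ : 1 / 2 < p) (hp₁ : p ≤ 1) :
    StrictAntiOn (gap p) (Iic p) := by
  intro x hx y hy hxy
  have hslope : (2 * p - 1) * (x + y) - 2 * p * (2 - p) < 0 := by
    have hsum : 0 < 2 * p - (x + y) := by linarith [mem_Iic.1 hx, mem_Iic.1 hy]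
    nlinarith [mul_pos (by linarith : (0 : ℝ) < 2 * p - 1) hsum]
  have hdiff : 0 < gap p x - gap p y := by
    rw [gap_sub_gap]
    exact div_pos (mul_pos_of_neg_of_neg (sub_neg.2 hxy) hslope) two_pos
  exact sub_pos.1 hdiff

theorem continuous_gap (p : ℝ) : Continuous (gap p) := by
  unfold gap; fun_prop

end Delegation

open Delegation in
theorem stmt_13 (p : ℝ) (hp : p ∈ Set.Ioo (1/2 : ℝ) 1)
    (μ h : ℝ → ℝ) (hμ : ∀ t, μ t = (t + p) / 2)
    (hh : ∀ t, h t = p * (1 - t) * (1 - μ t) - (1 - p) * t * μ t) :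
    h (1/2) > 0 ∧ h p < 0 ∧ StrictAntiOn h (Set.Icc (1/2) p) ∧
      ∃! t : ℝ, t ∈ Set.Ioo (1/2 : ℝ) p ∧ h t = 0 := by
  obtain ⟨hp₀, hp₁⟩ := hp
  have h_eq : h = gap p := funext fun t => by rw [hh, hμ, gap]
  subst h_eq
  have hanti : StrictAntiOn (gap p) (Icc (1 / 2) p) :=
    (strictAntiOn_gap hp₀ hp₁.le).mono Icc_subset_Iic_self
  exact ⟨gap_half_pos hp₀, gap_self_neg hp₀ hp₁, hanti,
    hanti.existsUnique_mem_Ioo_eq_zero hp₀.le (continuous_gap p).continuousOn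
      (gap_half_pos hp₀) (gap_self_neg hp₀ hp₁)⟩
end

section
/- Let p ∈ (1/2, 1), M even with M ≥ 2, and let μ ∈ (1/2, p). In a group with K = 1 expert of precision p and M non-experts, suppose all non-experts vote sincerely with common precision μ. Then the probability that sincere majority voting over all M+1 votes is correct, namely Σ_{c=0}^{M} C(M,c) μ^c (1-μ)^(M-c) [ p·1{c + 1 > (M+1)/2} + (1-p)·1{c > (M+1)/2} ], is strictly less than the corresponding probability in which μ is replaced by any μ' with μ < μ' < p. -/
private lemma tel_sum (a : ℕ → ℝ) (k : ℕ) :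
    ∀ n, k ≤ n → ∑ c ∈ Finset.Ico k n, (a c - a (c+1)) = a k - a n := by
  intro n hn
  induction n, hn using Nat.le_induction with
  | base => simp
  | succ n hn ih => rw [Finset.sum_Ico_succ_top hn, ih]; ring

theorem stmt_19 (p : ℝ) (hp : p ∈ Set.Ioo (1/2 : ℝ) 1)
    (M : ℕ) (hMeven : Even M) (hM : 2 ≤ M)
    (Pg : ℝ → ℝ)
    (hPg : ∀ μ : ℝ, Pg μ = ∑ c ∈ Finset.range (M + 1),
      (M.choose c : ℝ) * μ ^ c * (1 - μ) ^ (M - c) *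
        (p * (if ((c : ℝ) + 1 > ((M : ℝ) + 1) / 2) then (1 : ℝ) else 0) +
          (1 - p) * (if ((c : ℝ) > ((M : ℝ) + 1) / 2) then (1 : ℝ) else 0)))
    (μ μ' : ℝ) (hμ : μ ∈ Set.Ioo (1/2 : ℝ) p) (hμ' : μ < μ') (hμ'p : μ' < p) :
    Pg μ < Pg μ' := by
  obtain ⟨hp1, hp2⟩ := hp
  obtain ⟨hμ1, hμ2⟩ := hμ
  obtain ⟨m, rfl⟩ := hMeven
  have hm1 : 1 ≤ m := by omega
  set w : ℕ → ℝ := fun c =>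
    p * (if ((c : ℝ) + 1 > (((m+m : ℕ) : ℝ) + 1) / 2) then (1:ℝ) else 0) +
    (1 - p) * (if ((c : ℝ) > (((m+m : ℕ) : ℝ) + 1) / 2) then (1:ℝ) else 0) with hwdef
  have hw0 : ∀ c : ℕ, c < m → w c = 0 := by
    intro c hc
    have h1 : (c:ℝ) + 1 ≤ (m:ℝ) := by exact_mod_cast hc
    simp only [hwdef]
    rw [if_neg (not_lt.mpr (by push_cast; linarith)),
        if_neg (not_lt.mpr (by push_cast; linarith))]
    ring
  have hwm : w m = p := by
    simp only [hwdef]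
    rw [if_pos (by push_cast; linarith), if_neg (not_lt.mpr (by push_cast; linarith))]
    ring
  have hw1 : ∀ c : ℕ, m < c → w c = 1 := by
    intro c hc
    have h1 : (m:ℝ) + 1 ≤ (c:ℝ) := by exact_mod_cast hc
    simp only [hwdef]
    rw [if_pos (by push_cast; linarith), if_pos (by push_cast; linarith)]
    ring
  have hPF : Pg = fun y : ℝ => ∑ c ∈ Finset.range (m+m+1),
      ((m+m).choose c : ℝ) * y ^ c * (1 - y) ^ (m+m-c) * w c := by
    funext y; rw [hPg y]
  have hx01 : ∀ x : ℝ, 1/2 < x → x < p → HasDerivAt Pg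
      (p * ((m:ℝ) * ((m+m).choose m : ℝ) * x^(m-1) * (1-x)^m)
        + (1-p) * (((m+1:ℕ):ℝ) * ((m+m).choose (m+1) : ℝ) * x^m * (1-x)^(m-1))) x := by
    intro x hx1 hx2
    set a : ℕ → ℝ := fun c => (c:ℝ) * ((m+m).choose c : ℝ) * x^(c-1) * (1-x)^(m+m-c)
      with hadef
    have hterm : ∀ c ∈ Finset.range (m+m+1), HasDerivAt
        (fun y : ℝ => ((m+m).choose c : ℝ) * y ^ c * (1-y)^(m+m-c) * w c)
        ((a c - a (c+1)) * w c) x := by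
      intro c _
      have h2 : HasDerivAt (fun y : ℝ => (1-y)^(m+m-c))
          ((((m+m-c : ℕ)):ℝ) * (1-x)^(m+m-c-1) * (0-1)) x :=
        ((hasDerivAt_const x (1:ℝ)).sub (hasDerivAt_id x)).pow _
      have h4 := (((hasDerivAt_pow c x).mul h2).const_mul
        (((m+m).choose c : ℝ))).mul_const (w c)
      have hfun : (fun y : ℝ => ((m+m).choose c : ℝ) * (y ^ c * (1-y)^(m+m-c)) * w c)
          = fun y : ℝ => ((m+m).choose c : ℝ) * y ^ c * (1-y)^(m+m-c) * w c := by
        funext y; ring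
      simp only [Pi.mul_apply] at h4; rw [hfun] at h4
      have hcc : (((m+m).choose (c+1) : ℝ)) * ((c:ℝ)+1)
          = (((m+m).choose c : ℝ)) * (((m+m-c : ℕ)) : ℝ) := by
        exact_mod_cast Nat.choose_succ_right_eq (m+m) c
      have hee : m+m-(c+1) = m+m-c-1 := by omega
      have hval : ((m+m).choose c : ℝ) * ((c:ℝ) * x^(c-1) * (1-x)^(m+m-c)
          + x^c * ((((m+m-c : ℕ)):ℝ) * (1-x)^(m+m-c-1) * (0-1))) * w c
          = (a c - a (c+1)) * w c := by
        simp only [hadef, hee, Nat.add_sub_cancel]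
        push_cast
        linear_combination (x^c * (1-x)^(m+m-c-1) * (w c)) * hcc
      rw [hval] at h4
      exact h4
    have hs := HasDerivAt.fun_sum hterm
    have hsum : ∑ c ∈ Finset.range (m+m+1), (a c - a (c+1)) * w c
        = p * a m + (1-p) * a (m+1) := by
      rw [Finset.range_eq_Ico,
        ← Finset.sum_Ico_consecutive _ (Nat.zero_le m) (by omega : m ≤ m+m+1),
        Finset.sum_eq_sum_Ico_succ_bot (by omega : m < m+m+1)]
      rw [Finset.sum_eq_zero (fun c hc => by
        rw [hw0 c (Finset.mem_Ico.mp hc).2]; ring)]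
      rw [Finset.sum_congr rfl (fun c hc => by
        rw [hw1 c (by have := (Finset.mem_Ico.mp hc).1; omega), mul_one])]
      rw [tel_sum a (m+1) (m+m+1) (by omega), hwm]
      have hz : a (m+m+1) = 0 := by
        simp only [hadef]
        rw [Nat.choose_eq_zero_of_lt (by omega)]
        simp
      rw [hz]; ring
    rw [hsum] at hs
    have hfin : p * a m + (1-p) * a (m+1)
        = p * ((m:ℝ) * ((m+m).choose m : ℝ) * x^(m-1) * (1-x)^m)
          + (1-p) * (((m+1:ℕ):ℝ) * ((m+m).choose (m+1) : ℝ) * x^m * (1-x)^(m-1)) := by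
      simp only [hadef]
      have e1 : m+m-m = m := by omega
      have e2 : m+m-(m+1) = m-1 := by omega
      have e3 : m+1-1 = m := by omega
      rw [e1, e2, e3]
    rw [hfin] at hs
    rw [hPF]
    exact hs
  have hpos : ∀ x : ℝ, 1/2 < x → x < p →
      0 < p * ((m:ℝ) * ((m+m).choose m : ℝ) * x^(m-1) * (1-x)^m)
        + (1-p) * (((m+1:ℕ):ℝ) * ((m+m).choose (m+1) : ℝ) * x^m * (1-x)^(m-1)) := by
    intro x hx1 hx2
    have hx0 : 0 < x := by linarith
    have hx1' : 0 < 1 - x := by linarith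
    have hc1 : 0 < ((m+m).choose m : ℝ) := by
      exact_mod_cast Nat.choose_pos (by omega : m ≤ m+m)
    have hc2 : 0 < ((m+m).choose (m+1) : ℝ) := by
      exact_mod_cast Nat.choose_pos (by omega : m+1 ≤ m+m)
    have hm0 : 0 < (m:ℝ) := by exact_mod_cast hm1
    have hm0' : 0 < ((m+1:ℕ):ℝ) := by positivity
    have t1 : 0 < (m:ℝ) * ((m+m).choose m : ℝ) * x^(m-1) * (1-x)^m :=
      mul_pos (mul_pos (mul_pos hm0 hc1) (pow_pos hx0 _)) (pow_pos hx1' _)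
    have t2 : 0 < ((m+1:ℕ):ℝ) * ((m+m).choose (m+1) : ℝ) * x^m * (1-x)^(m-1) :=
      mul_pos (mul_pos (mul_pos hm0' hc2) (pow_pos hx0 _)) (pow_pos hx1' _)
    have hp0 : 0 < p := by linarith
    have hp1' : 0 < 1 - p := by linarith
    nlinarith [mul_pos hp0 t1, mul_pos hp1' t2]
  have smo : StrictMonoOn Pg (Set.Icc μ μ') := by
    apply strictMonoOn_of_deriv_pos (convex_Icc μ μ')
    · intro x hx
      obtain ⟨hxa, hxb⟩ := hx
      exact ((hx01 x (by linarith) (by linarith)).differentiableAt.continuousAt).continuousWithinAt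
    · intro x hx
      rw [interior_Icc] at hx
      obtain ⟨hxa, hxb⟩ := hx
      have hd := hx01 x (by linarith) (by linarith)
      rw [hd.deriv]
      exact hpos x (by linarith) (by linarith)
  exact smo ⟨le_refl μ, le_of_lt hμ'⟩ ⟨le_of_lt hμ', le_refl μ'⟩ hμ'
end
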